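/- arXiv:2007.14148 — 3 statements merged into one kernel-verified Lean document; each statement's English description precedes it below -/
import Mathlib

section
/- In the genus-3 surface group π₁(S₃) = ⟨a₁,b₁,a₂,b₂,a₃,b₃ ∣ [a₁,b₁][a₂,b₂][a₃,b₃] = 1⟩, the subgroup H generated by the images of a₁, b₁, a₂, b₂ is freely generated by these four elements, but H is not an elementarily embedded subgroup of π₁(S₃): the element [a₁,b₁][a₂,b₂] is a commutator in π₁(S₃) but not in H. -/
open FirstOrder
open scoped commutatorElement

/-- Function symbols of the first-order language of groups:
a binary multiplication, a unary inversion, and a constant for the identity. -/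
inductive GroupFunc : ℕ → Type
  | mul : GroupFunc 2
  | inv : GroupFunc 1
  | one : GroupFunc 0

/-- The first-order language of groups. -/
def groupLang : Language where
  Functions := GroupFunc
  Relations _ := Empty

/-- Every group is a structure for the language of groups in the natural way. -/
instance groupLangStructure (G : Type*) [Group G] : groupLang.Structure G where
  funMap {n} f x :=
    match f with
    | .mul => x 0 * x 1
    | .inv => (x 0)⁻¹
    | .one => 1
  RelMap {n} r _ := r.elim

/-- A subgroup `H` of a group `G` is *elementarily embedded* if for every first-order
formula `φ(x₁,…,xₙ)` in the language of groups and all `a₁,…,aₙ ∈ H`, the formula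
`φ(a₁,…,aₙ)` holds in `H` if and only if it holds in `G`. -/
def Subgroup.IsElementarilyEmbedded {G : Type*} [Group G] (H : Subgroup G) : Prop :=
  ∀ (n : ℕ) (φ : groupLang.Formula (Fin n)) (a : Fin n → H),
    φ.Realize a ↔ φ.Realize (fun i => (a i : G))

/-- The surface relator `[a₁,b₁]⋯[a_g,b_g]` in the free group on generators
`a₁,…,a_g` (the `Sum.inl` generators) and `b₁,…,b_g` (the `Sum.inr` generators),
where `⁅a,b⁆ = a*b*a⁻¹*b⁻¹`. -/
def orientableSurfaceRelator (g : ℕ) : FreeGroup (Fin g ⊕ Fin g) :=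
  (List.ofFn fun i : Fin g =>
    ⁅FreeGroup.of (Sum.inl i : Fin g ⊕ Fin g), FreeGroup.of (Sum.inr i : Fin g ⊕ Fin g)⁆).prod

/-- The fundamental group `π₁(S_g) = ⟨a₁,b₁,…,a_g,b_g ∣ [a₁,b₁]⋯[a_g,b_g] = 1⟩` of the
closed orientable surface of genus `g`. -/
abbrev OrientableSurfaceGroup (g : ℕ) : Type :=
  PresentedGroup ({orientableSurfaceRelator g} : Set (FreeGroup (Fin g ⊕ Fin g)))

/-- The images of the generators `a₁, b₁, a₂, b₂` in `π₁(S₃)`. -/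
def S3a1 : OrientableSurfaceGroup 3 := PresentedGroup.of (Sum.inl 0)

def S3b1 : OrientableSurfaceGroup 3 := PresentedGroup.of (Sum.inr 0)

def S3a2 : OrientableSurfaceGroup 3 := PresentedGroup.of (Sum.inl 1)

def S3b2 : OrientableSurfaceGroup 3 := PresentedGroup.of (Sum.inr 1)

/-!
`π₁(S₃)` maps to the HNN extension of `F(a₁,b₁,a₂,b₂) * ⟨y⟩` whose stable letter `t` conjugates
`y` to `c⁻¹y`, where `c = [a₁,b₁][a₂,b₂]`, by `a₃ ↦ t`, `b₃ ↦ y`; since the base group embeds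
in the HNN extension, `a₁,b₁,a₂,b₂` generate a free subgroup `H` of `π₁(S₃)`.
The surface relation reads `c = [b₃,a₃]`, so `c` is a commutator in `π₁(S₃)`. It is not one in
`H`: in the 2-step nilpotent group `ℤ⁴ × M₄(ℤ)` with cocycle `(v, w) ↦ v wᵀ` a commutator has
central part `u vᵀ - v uᵀ`, whose entries satisfy the Plücker relation, while `c` has central part
`e₁ ∧ e₂ + e₃ ∧ e₄`, which does not. Being a commutator is expressed by a first-order formula,
so `H` is not elementarily embedded.
-/

section CommutatorFormula

open Language

def commutatorTerm : groupLang.Term (Fin 1 ⊕ Fin 2) :=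
  Functions.apply₂ (GroupFunc.mul : groupLang.Functions 2)
    (Functions.apply₂ (GroupFunc.mul : groupLang.Functions 2)
      (Functions.apply₂ (GroupFunc.mul : groupLang.Functions 2) &0 &1)
      (Functions.apply₁ (GroupFunc.inv : groupLang.Functions 1) &0))
    (Functions.apply₁ (GroupFunc.inv : groupLang.Functions 1) &1)

def isCommutatorFormula : groupLang.Formula (Fin 1) :=
  (Term.bdEqual (Term.var (Sum.inl 0)) commutatorTerm).ex.ex

theorem realize_isCommutatorFormula {G : Type*} [Group G] (c : G) :
    isCommutatorFormula.Realize (fun _ => c) ↔ ∃ u v : G, c = ⁅u, v⁆ := by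
  simp only [isCommutatorFormula, Formula.Realize, BoundedFormula.realize_ex,
    BoundedFormula.realize_bdEqual, Term.realize_var, Sum.elim_inl]
  rfl

theorem Subgroup.IsElementarilyEmbedded.exists_mem_commutator_eq {G : Type*} [Group G]
    {H : Subgroup G} (hH : H.IsElementarilyEmbedded) {c : G} (hc : c ∈ H)
    (h : ∃ u v : G, c = ⁅u, v⁆) : ∃ u v : G, u ∈ H ∧ v ∈ H ∧ c = ⁅u, v⁆ := by
  obtain ⟨u, v, huv⟩ := (realize_isCommutatorFormula (⟨c, hc⟩ : H)).mp <|
    (hH 1 isCommutatorFormula fun _ => ⟨c, hc⟩).mpr ((realize_isCommutatorFormula c).mpr h)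
  exact ⟨u, v, u.2, v.2, congrArg Subtype.val huv⟩

end CommutatorFormula

@[ext]
structure OuterHeisenberg (R ι : Type*) where
  v : ι → R
  m : ι → ι → R

namespace OuterHeisenberg

variable {R ι : Type*} [CommRing R]

instance : Mul (OuterHeisenberg R ι) :=
  ⟨fun x y => ⟨x.v + y.v, x.m + y.m + fun i j => x.v i * y.v j⟩⟩
instance : One (OuterHeisenberg R ι) := ⟨⟨0, 0⟩⟩
instance : Inv (OuterHeisenberg R ι) := ⟨fun x => ⟨-x.v, -x.m + fun i j => x.v i * x.v j⟩⟩

@[simp] theorem mul_v (x y : OuterHeisenberg R ι) : (x * y).v = x.v + y.v := rfl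
@[simp] theorem mul_m (x y : OuterHeisenberg R ι) :
    (x * y).m = x.m + y.m + fun i j => x.v i * y.v j := rfl
@[simp] theorem one_v : (1 : OuterHeisenberg R ι).v = 0 := rfl
@[simp] theorem one_m : (1 : OuterHeisenberg R ι).m = 0 := rfl
@[simp] theorem inv_v (x : OuterHeisenberg R ι) : x⁻¹.v = -x.v := rfl
@[simp] theorem inv_m (x : OuterHeisenberg R ι) : x⁻¹.m = -x.m + fun i j => x.v i * x.v j := rfl

instance : Group (OuterHeisenberg R ι) where
  mul_assoc x y z := by ext <;> simp <;> ring
  one_mul x := by ext <;> simp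
  mul_one x := by ext <;> simp
  inv_mul_cancel x := by ext <;> simp

theorem commutator_m (x y : OuterHeisenberg R ι) (i j : ι) :
    ⁅x, y⁆.m i j = x.v i * y.v j - y.v i * x.v j := by
  simp [commutatorElement_def]; ring

theorem commutator_v (x y : OuterHeisenberg R ι) : ⁅x, y⁆.v = 0 := by
  simp [commutatorElement_def]

theorem commutator_pluecker (x y : OuterHeisenberg R ι) (i j k l : ι) :
    ⁅x, y⁆.m i j * ⁅x, y⁆.m k l - ⁅x, y⁆.m i k * ⁅x, y⁆.m j l + ⁅x, y⁆.m i l * ⁅x, y⁆.m j k =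
      0 := by
  simp only [commutator_m]; ring

def basis [DecidableEq ι] (i : ι) : OuterHeisenberg R ι := ⟨Pi.single i 1, 0⟩

end OuterHeisenberg

open OuterHeisenberg in
theorem FreeGroup.commutator_mul_commutator_ne_commutator {ι : Type*} [DecidableEq ι]
    {i j k l : ι} (hij : i ≠ j) (hik : i ≠ k) (hil : i ≠ l) (hjk : j ≠ k) (hjl : j ≠ l)
    (hkl : k ≠ l) (u v : FreeGroup ι) :
    ⁅of i, of j⁆ * ⁅of k, of l⁆ ≠ ⁅u, v⁆ := by
  intro h
  let e : ι → OuterHeisenberg ℤ ι := basis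
  have hw : ⁅e i, e j⁆ * ⁅e k, e l⁆ = ⁅lift e u, lift e v⁆ := by
    simpa using congrArg (lift e) h
  have key := commutator_pluecker (lift e u) (lift e v) i j k l
  simp [← hw, e, commutator_m, commutator_v, basis, hij, hik, hil, hjk, hjl, hkl] at key

theorem FreeGroup.lift_orientableSurfaceRelator {G : Type*} [Group G] {g : ℕ}
    (f : Fin g ⊕ Fin g → G) :
    lift f (orientableSurfaceRelator g) = (List.ofFn fun i => ⁅f (.inl i), f (.inr i)⁆).prod := by
  simp [orientableSurfaceRelator, map_list_prod, List.map_ofFn, Function.comp_def]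

theorem OrientableSurfaceGroup.prod_commutator_eq_one (g : ℕ) :
    (List.ofFn fun i : Fin g =>
      ⁅(PresentedGroup.of (Sum.inl i) : OrientableSurfaceGroup g),
        (PresentedGroup.of (Sum.inr i) : OrientableSurfaceGroup g)⁆).prod = 1 := by
  have hmk : FreeGroup.lift PresentedGroup.of = PresentedGroup.mk {orientableSurfaceRelator g} :=
    FreeGroup.ext_hom _ _ fun _ => rfl
  rw [← FreeGroup.lift_orientableSurfaceRelator, hmk]
  exact PresentedGroup.one_of_mem rfl

theorem S3_commutator_mul_commutator_eq : ⁅S3a1, S3b1⁆ * ⁅S3a2, S3b2⁆ =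
    ⁅(PresentedGroup.of (Sum.inr 2) : OrientableSurfaceGroup 3),
      (PresentedGroup.of (Sum.inl 2) : OrientableSurfaceGroup 3)⁆ := by
  have h := OrientableSurfaceGroup.prod_commutator_eq_one 3
  simp only [List.ofFn_succ, List.ofFn_zero, List.prod_cons, List.prod_nil, mul_one,
    ← mul_assoc] at h
  exact (eq_inv_of_mul_eq_one_left h).trans (commutatorElement_inv _ _)

theorem zpowersHom_injective_of_apply_eq_ofAdd_one {G : Type*} [Group G]
    (f : G →* Multiplicative ℤ) {x : G} (hx : f x = Multiplicative.ofAdd 1) :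
    Function.Injective (zpowersHom G x) := fun a b hab => by
  simpa [hx, ← ofAdd_zsmul] using congrArg f hab

namespace FreeGroup

variable {ι : Type*}

def exponentSumNone : FreeGroup (Option ι) →* Multiplicative ℤ :=
  lift fun o => o.elim (Multiplicative.ofAdd 1) 1

theorem exponentSumNone_map_some (c : FreeGroup ι) : exponentSumNone (map some c) = 1 := by
  have h : (exponentSumNone (ι := ι)).comp (map some) = 1 := ext_hom _ _ fun _ => rfl
  exact DFunLike.congr_fun h c

theorem injective_zpowersHom_of_none :
    Function.Injective (zpowersHom _ (of none : FreeGroup (Option ι))) :=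
  zpowersHom_injective_of_apply_eq_ofAdd_one exponentSumNone rfl

variable (c : FreeGroup ι)

theorem injective_zpowersHom_inv_map_some_mul_of_none :
    Function.Injective (zpowersHom _ ((map some c)⁻¹ * of none)) :=
  zpowersHom_injective_of_apply_eq_ofAdd_one exponentSumNone <| by
    rw [_root_.map_mul, _root_.map_inv, exponentSumNone_map_some, inv_one, one_mul]; rfl

noncomputable def handleEquiv :
    (zpowersHom _ (of none : FreeGroup (Option ι))).range ≃*
      (zpowersHom _ ((map some c)⁻¹ * of none)).range :=
  (MonoidHom.ofInjective injective_zpowersHom_of_none).symm.trans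
    (MonoidHom.ofInjective (injective_zpowersHom_inv_map_some_mul_of_none c))

/-- `F(ι)` with a handle attached along `c`: the group `⟨ι, y, t ∣ c ⁅t, y⁆ = 1⟩`, realised as an
HNN extension of `F(ι) * ⟨y⟩` in which `t` conjugates `y` to `c⁻¹ y`. -/
abbrev HandleGroup : Type _ := HNNExtension (FreeGroup (Option ι)) _ _ (handleEquiv c)

theorem handleEquiv_ofInjective (z : Multiplicative ℤ) :
    handleEquiv c (MonoidHom.ofInjective injective_zpowersHom_of_none z) =
      MonoidHom.ofInjective (injective_zpowersHom_inv_map_some_mul_of_none c) z := by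
  rw [handleEquiv, MulEquiv.trans_apply, MulEquiv.symm_apply_apply]

theorem HandleGroup.t_mul_of_none :
    (HNNExtension.t : HandleGroup c) * HNNExtension.of (of none) =
      HNNExtension.of ((map some c)⁻¹ * of none) * HNNExtension.t := by
  have h := HNNExtension.t_mul_of (φ := handleEquiv c)
    (MonoidHom.ofInjective injective_zpowersHom_of_none (Multiplicative.ofAdd 1))
  rw [handleEquiv_ofInjective] at h
  simpa only [MonoidHom.ofInjective_apply, zpowersHom_apply, toAdd_ofAdd, zpow_one] using h

theorem HandleGroup.commutator_t_of_none :
    ⁅(HNNExtension.t : HandleGroup c), (HNNExtension.of (of none) : HandleGroup c)⁆ =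
      HNNExtension.of (map some c)⁻¹ := by
  rw [commutatorElement_def, t_mul_of_none, mul_inv_cancel_right]
  simp only [_root_.map_mul, mul_inv_cancel_right]

theorem HandleGroup.of_map_some_injective :
    Function.Injective ((HNNExtension.of : _ →* HandleGroup c).comp (map some)) := by
  rw [MonoidHom.coe_comp]
  exact (HNNExtension.of_injective (handleEquiv c)).comp (map_injective (Option.some_injective ι))

end FreeGroup

noncomputable def OrientableSurfaceGroup.toHandleGroupGens (g : ℕ) :
    Fin (g + 1) ⊕ Fin (g + 1) → FreeGroup.HandleGroup (orientableSurfaceRelator g) :=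
  Sum.elim (Fin.lastCases HNNExtension.t fun i => HNNExtension.of (.of (some (.inl i))))
    (Fin.lastCases (HNNExtension.of (.of none)) fun i => HNNExtension.of (.of (some (.inr i))))

theorem OrientableSurfaceGroup.lift_toHandleGroupGens_relator (g : ℕ) :
    FreeGroup.lift (toHandleGroupGens g) (orientableSurfaceRelator (g + 1)) = 1 := by
  have hbase : (HNNExtension.of : _ →* FreeGroup.HandleGroup (orientableSurfaceRelator g)).comp
      (FreeGroup.map some) = FreeGroup.lift fun x => HNNExtension.of (.of (some x)) :=
    FreeGroup.ext_hom _ _ fun _ => rfl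
  have h := DFunLike.congr_fun hbase (orientableSurfaceRelator g)
  rw [MonoidHom.comp_apply, FreeGroup.lift_orientableSurfaceRelator] at h
  rw [FreeGroup.lift_orientableSurfaceRelator, List.ofFn_succ', List.prod_concat]
  simp only [toHandleGroupGens, Sum.elim_inl, Sum.elim_inr, Fin.lastCases_last,
    Fin.lastCases_castSucc, ← h, FreeGroup.HandleGroup.commutator_t_of_none, ← map_mul,
    mul_inv_cancel, map_one]

noncomputable def OrientableSurfaceGroup.toHandleGroup (g : ℕ) :
    OrientableSurfaceGroup (g + 1) →* FreeGroup.HandleGroup (orientableSurfaceRelator g) :=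
  PresentedGroup.toGroup fun r hr => by
    rw [Set.mem_singleton_iff.mp hr]; exact lift_toHandleGroupGens_relator g

def OrientableSurfaceGroup.castSuccLift (g : ℕ) :
    FreeGroup (Fin g ⊕ Fin g) →* OrientableSurfaceGroup (g + 1) :=
  FreeGroup.lift fun x => PresentedGroup.of (Sum.map Fin.castSucc Fin.castSucc x)

theorem OrientableSurfaceGroup.castSuccLift_injective (g : ℕ) :
    Function.Injective (castSuccLift g) := by
  have h : (toHandleGroup g).comp (castSuccLift g) =
      (HNNExtension.of).comp (FreeGroup.map some) := by
    refine FreeGroup.ext_hom _ _ fun x => ?_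
    rcases x with i | i <;>
      simp [castSuccLift, toHandleGroup, toHandleGroupGens]
  refine Function.Injective.of_comp (f := toHandleGroup g) ?_
  rw [← MonoidHom.coe_comp, h]
  exact FreeGroup.HandleGroup.of_map_some_injective _

theorem lift_S3_eq_castSuccLift_comp :
    FreeGroup.lift ![S3a1, S3b1, S3a2, S3b2] =
      (OrientableSurfaceGroup.castSuccLift 2).comp
        (FreeGroup.map ![Sum.inl 0, Sum.inr 0, Sum.inl 1, Sum.inr 1]) :=
  FreeGroup.ext_hom _ _ fun i => by fin_cases i <;> rfl

theorem lift_S3_injective :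
    Function.Injective (FreeGroup.lift ![S3a1, S3b1, S3a2, S3b2]) := by
  rw [lift_S3_eq_castSuccLift_comp, MonoidHom.coe_comp]
  exact (OrientableSurfaceGroup.castSuccLift_injective 2).comp
    (FreeGroup.map_injective (by decide))

theorem closure_S3_eq_range :
    Subgroup.closure {S3a1, S3b1, S3a2, S3b2} =
      (FreeGroup.lift ![S3a1, S3b1, S3a2, S3b2]).range := by
  rw [FreeGroup.range_lift_eq_closure]
  simp only [Matrix.range_cons, Matrix.range_empty, Set.union_empty, Set.singleton_union]

theorem lift_S3_commutator_mul_commutator :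
    FreeGroup.lift ![S3a1, S3b1, S3a2, S3b2]
      (⁅(.of 0 : FreeGroup (Fin 4)), (.of 1 : FreeGroup (Fin 4))⁆ *
        ⁅(.of 2 : FreeGroup (Fin 4)), (.of 3 : FreeGroup (Fin 4))⁆) =
      ⁅S3a1, S3b1⁆ * ⁅S3a2, S3b2⁆ := by
  simp

theorem not_exists_commutator_in_closure_S3 :
    ¬ ∃ u v : OrientableSurfaceGroup 3,
      u ∈ Subgroup.closure {S3a1, S3b1, S3a2, S3b2} ∧
      v ∈ Subgroup.closure {S3a1, S3b1, S3a2, S3b2} ∧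
      ⁅S3a1, S3b1⁆ * ⁅S3a2, S3b2⁆ = ⁅u, v⁆ := by
  rintro ⟨u, v, hu, hv, h⟩
  rw [closure_S3_eq_range] at hu hv
  obtain ⟨u, rfl⟩ := hu
  obtain ⟨v, rfl⟩ := hv
  rw [← lift_S3_commutator_mul_commutator, ← map_commutatorElement] at h
  exact FreeGroup.commutator_mul_commutator_ne_commutator (by decide) (by decide) (by decide)
    (by decide) (by decide) (by decide) u v (lift_S3_injective h)

/-- In `π₁(S₃) = ⟨a₁,b₁,a₂,b₂,a₃,b₃ ∣ [a₁,b₁][a₂,b₂][a₃,b₃] = 1⟩`, the subgroup `H`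
generated by the images of `a₁, b₁, a₂, b₂` is freely generated by these four elements,
but it is not elementarily embedded: the element `[a₁,b₁][a₂,b₂]` is a commutator in
`π₁(S₃)` but not in `H`. -/
theorem genus_three_subgroup_not_elementarilyEmbedded :
    Function.Injective
        ⇑(FreeGroup.lift (![S3a1, S3b1, S3a2, S3b2] : Fin 4 → OrientableSurfaceGroup 3)) ∧
      ¬ (Subgroup.closure {S3a1, S3b1, S3a2, S3b2} :
          Subgroup (OrientableSurfaceGroup 3)).IsElementarilyEmbedded ∧
      (∃ u v : OrientableSurfaceGroup 3, ⁅S3a1, S3b1⁆ * ⁅S3a2, S3b2⁆ = ⁅u, v⁆) ∧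
      ¬ ∃ u v : OrientableSurfaceGroup 3,
          u ∈ Subgroup.closure {S3a1, S3b1, S3a2, S3b2} ∧
          v ∈ Subgroup.closure {S3a1, S3b1, S3a2, S3b2} ∧
          ⁅S3a1, S3b1⁆ * ⁅S3a2, S3b2⁆ = ⁅u, v⁆ := by
  have hcomm : ∃ u v : OrientableSurfaceGroup 3, ⁅S3a1, S3b1⁆ * ⁅S3a2, S3b2⁆ = ⁅u, v⁆ :=
    ⟨_, _, S3_commutator_mul_commutator_eq⟩
  have hmem : ⁅S3a1, S3b1⁆ * ⁅S3a2, S3b2⁆ ∈ Subgroup.closure {S3a1, S3b1, S3a2, S3b2} := by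
    rw [closure_S3_eq_range, ← lift_S3_commutator_mul_commutator]
    exact ⟨_, rfl⟩
  refine ⟨lift_S3_injective, fun hH => ?_, hcomm, not_exists_commutator_in_closure_S3⟩
  exact not_exists_commutator_in_closure_S3 (hH.exists_mem_commutator_eq hmem hcomm)
end

section
/- In the free group F₄ with free basis e₁, e₂, e₃, e₄, the element [e₁,e₂][e₃,e₄] is not a commutator: there exist no elements u, v ∈ F₄ with [e₁,e₂][e₃,e₄] = [u,v]. -/
/-!
Map `F₄` to the group `TensorHeisenberg (Fin 4) ℤ` of pairs `(v, M)` with `v ∈ ℤ⁴`, `M` a `4 × 4`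
matrix and multiplication `(v, M) (w, N) = (v + w, M + N + v wᵀ)`. Commutators there are
`(0, a ∧ b)` with `a ∧ b = a bᵀ - b aᵀ`, so `[e₁,e₂][e₃,e₄]` goes to `(0, e₁ ∧ e₂ + e₃ ∧ e₄)` and any
commutator `[u,v]` to some `(0, a ∧ b)`. The Pfaffian `M₁₂ M₃₄ - M₁₃ M₂₄ + M₁₄ M₂₃` vanishes on
every `a ∧ b` (the Plücker relation) but equals `1` on `e₁ ∧ e₂ + e₃ ∧ e₄`.
-/

open scoped commutatorElement
open Matrix

def Matrix.wedge {ι R : Type*} [Ring R] (a b : ι → R) : Matrix ι ι R :=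
  vecMulVec a b - vecMulVec b a

def Matrix.pfaffian₄ {R : Type*} [CommRing R] (M : Matrix (Fin 4) (Fin 4) R) : R :=
  M 0 1 * M 2 3 - M 0 2 * M 1 3 + M 0 3 * M 1 2

lemma Matrix.pfaffian₄_wedge {R : Type*} [CommRing R] (a b : Fin 4 → R) :
    pfaffian₄ (wedge a b) = 0 := by
  simp only [pfaffian₄, wedge, sub_apply, vecMulVec_apply]
  ring

@[ext]
structure TensorHeisenberg (ι R : Type*) where
  fst : ι → R
  snd : Matrix ι ι R

namespace TensorHeisenberg

variable {ι R : Type*} [Ring R]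

instance : Mul (TensorHeisenberg ι R) :=
  ⟨fun x y => ⟨x.fst + y.fst, x.snd + y.snd + vecMulVec x.fst y.fst⟩⟩

instance : One (TensorHeisenberg ι R) := ⟨⟨0, 0⟩⟩

instance : Inv (TensorHeisenberg ι R) := ⟨fun x => ⟨-x.fst, -x.snd + vecMulVec x.fst x.fst⟩⟩

@[simp] lemma fst_mul (x y : TensorHeisenberg ι R) : (x * y).fst = x.fst + y.fst := rfl

@[simp] lemma snd_mul (x y : TensorHeisenberg ι R) :
    (x * y).snd = x.snd + y.snd + vecMulVec x.fst y.fst := rfl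

@[simp] lemma fst_one : (1 : TensorHeisenberg ι R).fst = 0 := rfl

@[simp] lemma snd_one : (1 : TensorHeisenberg ι R).snd = 0 := rfl

@[simp] lemma fst_inv (x : TensorHeisenberg ι R) : x⁻¹.fst = -x.fst := rfl

@[simp] lemma snd_inv (x : TensorHeisenberg ι R) :
    x⁻¹.snd = -x.snd + vecMulVec x.fst x.fst := rfl

instance : Group (TensorHeisenberg ι R) where
  mul_assoc x y z := by
    ext1 <;> simp only [fst_mul, snd_mul, add_vecMulVec, vecMulVec_add] <;> abel
  one_mul x := by ext1 <;> simp
  mul_one x := by ext1 <;> simp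
  inv_mul_cancel x := by ext1 <;> simp [neg_vecMulVec]

lemma fst_commutatorElement (x y : TensorHeisenberg ι R) : ⁅x, y⁆.fst = 0 := by
  simp [commutatorElement_def]

lemma snd_commutatorElement (x y : TensorHeisenberg ι R) :
    ⁅x, y⁆.snd = wedge x.fst y.fst := by
  simp only [commutatorElement_def, fst_mul, snd_mul, fst_inv, snd_inv, wedge, add_vecMulVec,
    neg_vecMulVec, vecMulVec_neg]
  abel

lemma snd_commutatorElement_mul (x y z : TensorHeisenberg ι R) :
    (⁅x, y⁆ * z).snd = wedge x.fst y.fst + z.snd := by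
  simp [snd_commutatorElement, fst_commutatorElement]

end TensorHeisenberg

open TensorHeisenberg in
/-- In the free group `F₄` with free basis `e₁, e₂, e₃, e₄`, the element
`[e₁,e₂][e₃,e₄]` (where `⁅a,b⁆ = a*b*a⁻¹*b⁻¹`) is not a commutator. -/
theorem not_commutator_in_freeGroup_four :
    ¬ ∃ u v : FreeGroup (Fin 4),
        ⁅FreeGroup.of (0 : Fin 4), FreeGroup.of (1 : Fin 4)⁆ *
            ⁅FreeGroup.of (2 : Fin 4), FreeGroup.of (3 : Fin 4)⁆ = ⁅u, v⁆ := by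
  rintro ⟨u, v, h⟩
  let φ : FreeGroup (Fin 4) →* TensorHeisenberg (Fin 4) ℤ :=
    FreeGroup.lift fun i => ⟨Pi.single i 1, 0⟩
  have hφ : ∀ i, (φ (FreeGroup.of i)).fst = Pi.single i 1 := fun i => by simp [φ]
  have hpf := congrArg (fun g => pfaffian₄ (φ g).snd) h
  simp only [map_mul, map_commutatorElement, snd_commutatorElement_mul, snd_commutatorElement,
    hφ, pfaffian₄_wedge] at hpf
  have hpf_image : pfaffian₄ (wedge (Pi.single 0 1) (Pi.single 1 1) +
      wedge (Pi.single 2 1) (Pi.single 3 1) : Matrix (Fin 4) (Fin 4) ℤ) = 1 := by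
    decide
  exact one_ne_zero (hpf_image.symm.trans hpf)
end

section
/- A group G is CSA if and only if G is commutative transitive and, for all a, t ∈ G with a ≠ 1, if tat⁻¹ commutes with a then t commutes with a. -/
/-- A subgroup `M` of a group `G` is *malnormal* if for every `g ∉ M` the intersection
`gMg⁻¹ ∩ M` is trivial (an element `y` lies in `gMg⁻¹` iff `g⁻¹ * y * g ∈ M`). -/
def Subgroup.IsMalnormal {G : Type*} [Group G] (M : Subgroup G) : Prop :=
  ∀ g : G, g ∉ M → ∀ y : G, y ∈ M → g⁻¹ * y * g ∈ M → y = 1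

/-- A subgroup is a *maximal abelian subgroup* if it is abelian and not properly
contained in any abelian subgroup. -/
def Subgroup.IsMaximalAbelian {G : Type*} [Group G] (M : Subgroup G) : Prop :=
  (∀ x ∈ M, ∀ y ∈ M, Commute x y) ∧
    ∀ N : Subgroup G, (∀ x ∈ N, ∀ y ∈ N, Commute x y) → M ≤ N → N = M

/-- A group is *CSA* if every maximal abelian subgroup is malnormal. -/
def IsCSA (G : Type*) [Group G] : Prop :=
  ∀ M : Subgroup G, M.IsMaximalAbelian → M.IsMalnormal

/-- A group is *commutative transitive* if commutation is transitive on non-identity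
elements. -/
def IsCommutativeTransitive (G : Type*) [Group G] : Prop :=
  ∀ x y z : G, x ≠ 1 → y ≠ 1 → z ≠ 1 → Commute x y → Commute y z → Commute x z

/-!
In a CSA group the centralizer of any `a ≠ 1` is the maximal abelian subgroup containing `a`:
an element commuting with `a` conjugates `a` into that subgroup, so malnormality puts it there.
Abelian centralizers give commutative transitivity, and if `t a t⁻¹` commutes with `a` then
malnormality of the centralizer of `a` forces `t` into it.

Conversely, commutative transitivity makes the centralizer of `y ≠ 1` abelian, so it equals any
maximal abelian `M ∋ y`. If `g⁻¹ y g ∈ M` with `y ≠ 1`, then `g⁻¹ y g` commutes with `y`, the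
second condition makes `g` commute with `y`, and hence `g ∈ M`.
-/

section

variable {G : Type*} [Group G]

theorem Subgroup.exists_isMaximalAbelian_mem (a : G) :
    ∃ M : Subgroup G, M.IsMaximalAbelian ∧ a ∈ M := by
  let abelian : Set (Subgroup G) := {H | ∀ x ∈ H, ∀ y ∈ H, Commute x y}
  have chain_bound : ∀ c ⊆ abelian, IsChain (· ≤ ·) c → ∀ H ∈ c,
      ∃ ub ∈ abelian, ∀ H' ∈ c, H' ≤ ub := by
    intro c hc hchain H hH
    refine ⟨sSup c, fun x hx y hy => ?_, fun _ => le_sSup⟩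
    rw [Subgroup.mem_sSup_of_directedOn ⟨H, hH⟩ hchain.directedOn] at hx hy
    obtain ⟨S, hS, hxS⟩ := hx
    obtain ⟨T, hT, hyT⟩ := hy
    rcases hchain.total hS hT with hST | hTS
    · exact hc hT x (hST hxS) y hyT
    · exact hc hS x hxS y (hTS hyT)
  have zpowers_abelian : Subgroup.zpowers a ∈ abelian := by
    rintro _ ⟨m, rfl⟩ _ ⟨n, rfl⟩
    exact (Commute.refl a).zpow_zpow m n
  obtain ⟨M, hle, hM, hmax⟩ := zorn_le_nonempty₀ abelian chain_bound _ zpowers_abelian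
  exact ⟨M, ⟨hM, fun N hN hMN => le_antisymm (hmax hN hMN) hMN⟩,
    hle (Subgroup.mem_zpowers a)⟩

namespace Subgroup.IsMalnormal

variable {M : Subgroup G} {x y : G}

theorem mem_of_conj_mem (hM : M.IsMalnormal) (hy : y ∈ M) (hy1 : y ≠ 1)
    (hx : x⁻¹ * y * x ∈ M) : x ∈ M :=
  by_contra fun hxM => hy1 (hM x hxM y hy hx)

theorem mem_of_commute (hM : M.IsMalnormal) (hy : y ∈ M) (hy1 : y ≠ 1)
    (hxy : Commute x y) : x ∈ M :=
  hM.mem_of_conj_mem hy hy1 (by rwa [mul_assoc, ← hxy.eq, inv_mul_cancel_left])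

end Subgroup.IsMalnormal

namespace IsCSA

variable {a x z : G}

theorem commute_of_commute (hG : IsCSA G) (ha : a ≠ 1) (hx : Commute x a)
    (hz : Commute z a) : Commute x z := by
  obtain ⟨M, hM, haM⟩ := Subgroup.exists_isMaximalAbelian_mem a
  have hMal := hG M hM
  exact hM.1 x (hMal.mem_of_commute haM ha hx) z (hMal.mem_of_commute haM ha hz)

theorem isCommutativeTransitive (hG : IsCSA G) : IsCommutativeTransitive G :=
  fun _ _ _ _ hy _ hxy hyz => hG.commute_of_commute hy hxy hyz.symm

theorem commute_of_commute_conj (hG : IsCSA G) (ha : a ≠ 1) {t : G}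
    (h : Commute (t * a * t⁻¹) a) : Commute t a := by
  obtain ⟨M, hM, haM⟩ := Subgroup.exists_isMaximalAbelian_mem a
  have hMal := hG M hM
  have hconj : t * a * t⁻¹ ∈ M := hMal.mem_of_commute haM ha h
  have htinv : t⁻¹ ∈ M := hMal.mem_of_conj_mem haM ha (by rwa [inv_inv])
  exact hM.1 t (inv_mem_iff.mp htinv) a haM

end IsCSA

namespace IsCommutativeTransitive

variable {x y z : G}

theorem commute_of_commute (hG : IsCommutativeTransitive G) (hy : y ≠ 1)
    (hxy : Commute x y) (hyz : Commute y z) : Commute x z := by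
  rcases eq_or_ne x 1 with rfl | hx
  · exact Commute.one_left z
  rcases eq_or_ne z 1 with rfl | hz
  · exact Commute.one_right x
  exact hG x y z hx hy hz hxy hyz

theorem centralizer_eq_of_isMaximalAbelian (hG : IsCommutativeTransitive G)
    {M : Subgroup G} (hM : M.IsMaximalAbelian) (hy : y ∈ M) (hy1 : y ≠ 1) :
    Subgroup.centralizer {y} = M := by
  refine hM.2 _ (fun x hx z hz => ?_) (fun x hx => ?_)
  · rw [Subgroup.mem_centralizer_singleton_iff] at hx hz
    exact hG.commute_of_commute hy1 hx hz.symm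
  · exact Subgroup.mem_centralizer_singleton_iff.mpr (hM.1 x hx y hy).eq

end IsCommutativeTransitive

end

/-- A group `G` is CSA if and only if it is commutative transitive and, whenever
`t * a * t⁻¹` commutes with `a` for some `a ≠ 1`, then `t` commutes with `a`. -/
theorem isCSA_iff (G : Type*) [Group G] :
    IsCSA G ↔
      IsCommutativeTransitive G ∧
        ∀ a t : G, a ≠ 1 → Commute (t * a * t⁻¹) a → Commute t a := by
  constructor
  · exact fun hG => ⟨hG.isCommutativeTransitive, fun a t ha => hG.commute_of_commute_conj ha⟩
  · rintro ⟨hct, hconj⟩ M hM g hgM y hyM hgy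
    by_contra hy1
    have hgy_comm : Commute g y :=
      Commute.inv_left_iff.mp (hconj y g⁻¹ hy1 (by simpa using hM.1 _ hgy y hyM))
    rw [← hct.centralizer_eq_of_isMaximalAbelian hM hyM hy1,
      Subgroup.mem_centralizer_singleton_iff] at hgM
    exact hgM hgy_comm.eq
end
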